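/- Let n₁ be an even positive integer, n₂ a positive integer, m = (n₁+2)/2, N = m + n₂, Υ₁ = n₁ + 2n₂, and 2⋆ = 2(N−1)/(N−2) (so that (Υ₁+2)/(Υ₁−2) = 2⋆−1). Let 𝒱, 𝒬 : [0,∞) × ℝ^{n₂} → ℝ, and suppose φ : [0,∞) × ℝ^{n₂} → (0,∞) is twice continuously differentiable and u(y,z) := φ(|y|,z) solves (−Δ_y − 4|y|²Δ_z)u + 4|y|²𝒱(|y|,z)u = 4𝒬(|y|,z)u^{(Υ₁+2)/(Υ₁−2)} on ℝ^{n₁} × ℝ^{n₂}. Then the function w : ℝ^m × ℝ^{n₂} → (0,∞) defined by w(y,z) := φ(√|y|, z) solves −Δw + 𝒱(√|y|,z)w = 𝒬(√|y|,z)·w^{2⋆−1}/|y| on ℝ^m × ℝ^{n₂}. -/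

import Mathlib

noncomputable section

open MeasureTheory Real Filter Asymptotics Metric

/-- Euclidean space `ℝ^n`. -/
abbrev Euc (n : ℕ) : Type := EuclideanSpace ℝ (Fin n)

/-- Combine a vector in `ℝ^m` with a vector in `ℝ^p` into a vector in `ℝ^{m+p}`. -/
def epair {m p : ℕ} (y : Euc m) (z : Euc p) : Euc (m + p) :=
  (EuclideanSpace.equiv (Fin (m + p)) ℝ).symm
    (Fin.addCases (motive := fun _ => ℝ) (fun i => y i) (fun j => z j))

/-- First block of coordinates. -/
def yPart {m p : ℕ} (x : Euc (m + p)) : Euc m :=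
  (EuclideanSpace.equiv (Fin m) ℝ).symm (fun i => x (Fin.castAdd p i))

/-- Second block of coordinates. -/
def zPart {m p : ℕ} (x : Euc (m + p)) : Euc p :=
  (EuclideanSpace.equiv (Fin p) ℝ).symm (fun j => x (Fin.natAdd m j))

/-- Update one coordinate of a Euclidean vector. -/
def updE {n : ℕ} (x : Euc n) (i : Fin n) (t : ℝ) : Euc n :=
  (EuclideanSpace.equiv (Fin n) ℝ).symm (Function.update (fun j => x j) i t)

/-- The Laplacian, as the sum of the pure second partial derivatives. -/
def lap {n : ℕ} (f : Euc n → ℝ) (x : Euc n) : ℝ :=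
  ∑ i : Fin n, iteratedDeriv 2 (fun t => f (updE x i t)) (x i)

/-- The Laplacian in the first block of variables. -/
def lapY {a b : ℕ} (f : Euc (a + b) → ℝ) (x : Euc (a + b)) : ℝ :=
  ∑ i : Fin a, iteratedDeriv 2 (fun t => f (epair (updE (yPart x) i t) (zPart x))) (yPart x i)

/-- The Laplacian in the second block of variables. -/
def lapZ {a b : ℕ} (f : Euc (a + b) → ℝ) (x : Euc (a + b)) : ℝ :=
  ∑ i : Fin b, iteratedDeriv 2 (fun t => f (epair (yPart x) (updE (zPart x) i t))) (zPart x i)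

/-- The critical exponent `2⋆ = 2(N-1)/(N-2)`. -/
def twoStar (N : ℕ) : ℝ := 2 * ((N : ℝ) - 1) / ((N : ℝ) - 2)

/-- The standard bubble `U_{ξ,λ}`. -/
def Ubub (m p : ℕ) (ξ : Euc p) (lam : ℝ) (x : Euc (m + p)) : ℝ :=
  (((m + p : ℕ) : ℝ) - 2) ^ (((((m + p : ℕ) : ℝ)) - 2) / 2) * ((m : ℝ) - 1) ^ ((((m + p : ℕ) : ℝ) - 2) / 2) *
    (lam / ((1 + lam * ‖yPart x‖) ^ 2 + lam ^ 2 * ‖zPart x - ξ‖ ^ 2)) ^ ((((m + p : ℕ) : ℝ) - 2) / 2)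

/-- A vector in `ℝ³`. -/
def mk3 (a b c : ℝ) : Euc 3 :=
  (EuclideanSpace.equiv (Fin 3) ℝ).symm ![a, b, c]

/-- `z'`, the first three coordinates of `z ∈ ℝ^{3+q}`. -/
def zPrime {q : ℕ} (z : Euc (3 + q)) : Euc 3 := yPart z

/-- `z''`, the remaining coordinates of `z ∈ ℝ^{3+q}`. -/
def zSecond {q : ℕ} (z : Euc (3 + q)) : Euc q := zPart z

/-- The concentration points `ξ_j^±` (the sign is `sgn`). -/
def xiPt (q k : ℕ) (r h sgn : ℝ) (w : Euc q) (j : ℕ) : Euc (3 + q) :=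
  epair (mk3 (r * Real.sqrt (1 - h ^ 2) * Real.cos (2 * ((j : ℝ) - 1) * π / k))
             (r * Real.sqrt (1 - h ^ 2) * Real.sin (2 * ((j : ℝ) - 1) * π / k))
             (sgn * (r * h))) w

/-- `|(|y|, |z'|, z'') - (0, r₀, z₀'')|`. -/
def profDist (m q : ℕ) (r0 : ℝ) (z0 : Euc q) (x : Euc (m + (3 + q))) : ℝ :=
  Real.sqrt (‖yPart x‖ ^ 2 + (‖zPrime (zPart x)‖ - r0) ^ 2 + ‖zSecond (zPart x) - z0‖ ^ 2)

/-- Distance between `(r, z'')` and `(r₀, z₀'')`. -/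
def distRZ (q : ℕ) (r : ℝ) (w : Euc q) (r0 : ℝ) (w0 : Euc q) : ℝ :=
  Real.sqrt ((r - r0) ^ 2 + ‖w - w0‖ ^ 2)

/-- The potential on `ℝ^N` induced by a function of `(r, z'')`. -/
def potX (m q : ℕ) (Vb : ℝ × Euc q → ℝ) (x : Euc (m + (3 + q))) : ℝ :=
  Vb (‖zPrime (zPart x)‖, zSecond (zPart x))

/-- The cut-off function `η`. -/
structure IsCutoff (m q : ℕ) (r0 : ℝ) (z0 : Euc q) (δ : ℝ) (η : Euc (m + (3 + q)) → ℝ) : Prop where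
  smooth : ContDiff ℝ (⊤ : ℕ∞) η
  nonneg : ∀ x, 0 ≤ η x
  le_one : ∀ x, η x ≤ 1
  eq_one : ∀ x, profDist m q r0 z0 x ≤ δ → η x = 1
  eq_zero : ∀ x, 2 * δ ≤ profDist m q r0 z0 x → η x = 0
  symm : ∀ x x', ‖yPart x‖ = ‖yPart x'‖ → ‖zPrime (zPart x)‖ = ‖zPrime (zPart x')‖ →
    zSecond (zPart x) = zSecond (zPart x') → η x = η x'

/-- `Z_{ξ_j^±,λ} = η U_{ξ_j^±,λ}`. -/
def Zxi (m q k : ℕ) (η : Euc (m + (3 + q)) → ℝ) (r h sgn : ℝ) (w : Euc q) (j : ℕ)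
    (lam : ℝ) (x : Euc (m + (3 + q))) : ℝ :=
  η x * Ubub m (3 + q) (xiPt q k r h sgn w j) lam x

/-- The approximate solution `Z_{r̄,h̄,z̄'',λ}`. -/
def Zfun (m q k : ℕ) (η : Euc (m + (3 + q)) → ℝ) (r h : ℝ) (w : Euc q) (lam : ℝ)
    (x : Euc (m + (3 + q))) : ℝ :=
  ∑ j ∈ Finset.Icc 1 k, (Zxi m q k η r h 1 w j lam x + Zxi m q k η r h (-1) w j lam x)

/-- `Z^*_{r̄,h̄,z̄'',λ}` (without the cut-off). -/
def Zstar (m q k : ℕ) (r h : ℝ) (w : Euc q) (lam : ℝ) (x : Euc (m + (3 + q))) : ℝ :=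
  ∑ j ∈ Finset.Icc 1 k,
    (Ubub m (3 + q) (xiPt q k r h 1 w j) lam x + Ubub m (3 + q) (xiPt q k r h (-1) w j) lam x)

/-- The derivatives `Z_{j,l}^±` of `Z_{ξ_j^±,λ}` with respect to `λ` (`l = 2`), `r̄` (`l = 3`)
and `z̄''_l` (`l = 4, …, N-m`). -/
def Zder (m q k : ℕ) (η : Euc (m + (3 + q)) → ℝ) (r h sgn : ℝ) (w : Euc q) (j : ℕ)
    (lam : ℝ) (l : ℕ) (x : Euc (m + (3 + q))) : ℝ :=
  if l = 2 then deriv (fun t => Zxi m q k η r h sgn w j t x) lam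
  else if l = 3 then deriv (fun t => Zxi m q k η t h sgn w j lam x) r
  else if hl : l - 4 < q then
    deriv (fun t => Zxi m q k η r h sgn (updE w ⟨l - 4, hl⟩ t) j lam x) (w ⟨l - 4, hl⟩)
  else 0

/-- The weight appearing in the `‖·‖_*` norm. -/
def wgt1 (m q k : ℕ) (r h : ℝ) (w : Euc q) (lam e : ℝ) (x : Euc (m + (3 + q))) : ℝ :=
  ∑ j ∈ Finset.Icc 1 k,
    ((1 + lam * ‖yPart x‖ + lam * ‖zPart x - xiPt q k r h 1 w j‖) ^ (-e) +
     (1 + lam * ‖yPart x‖ + lam * ‖zPart x - xiPt q k r h (-1) w j‖) ^ (-e))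

/-- The weight appearing in the `‖·‖_{**}` norm. -/
def wgt2 (m q k : ℕ) (r h : ℝ) (w : Euc q) (lam e : ℝ) (x : Euc (m + (3 + q))) : ℝ :=
  ∑ j ∈ Finset.Icc 1 k,
    (1 / (lam * ‖yPart x‖) * (1 + lam * ‖yPart x‖ + lam * ‖zPart x - xiPt q k r h 1 w j‖) ^ (-e) +
     1 / (lam * ‖yPart x‖) * (1 + lam * ‖yPart x‖ + lam * ‖zPart x - xiPt q k r h (-1) w j‖) ^ (-e))

/-- The `‖·‖_*` norm. -/
def starNorm (m q k : ℕ) (r h : ℝ) (w : Euc q) (lam τ : ℝ) (u : Euc (m + (3 + q)) → ℝ) : ℝ :=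
  ⨆ x : Euc (m + (3 + q)),
    lam ^ (-((((m + (3 + q) : ℕ) : ℝ) - 2) / 2)) * |u x| /
      wgt1 m q k r h w lam (((((m + (3 + q) : ℕ) : ℝ)) - 2) / 2 + τ) x

/-- The `‖·‖_{**}` norm. -/
def dstarNorm (m q k : ℕ) (r h : ℝ) (w : Euc q) (lam τ : ℝ) (f : Euc (m + (3 + q)) → ℝ) : ℝ :=
  ⨆ x : Euc (m + (3 + q)),
    lam ^ (-((((m + (3 + q) : ℕ) : ℝ) + 2) / 2)) * |f x| /
      wgt2 m q k r h w lam ((((m + (3 + q) : ℕ) : ℝ)) / 2 + τ) x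

/-- Rotation by angle `θ` in the `(z₁,z₂)`-plane. -/
def rot2 {q : ℕ} (θ : ℝ) (z : Euc (3 + q)) : Euc (3 + q) :=
  epair (mk3 (Real.cos θ * zPrime z 0 - Real.sin θ * zPrime z 1)
             (Real.sin θ * zPrime z 0 + Real.cos θ * zPrime z 1)
             (zPrime z 2)) (zSecond z)

/-- The reflection `(z₁,z₂,z₃) ↦ (z₁,-z₂,-z₃)`. -/
def flip23 {q : ℕ} (z : Euc (3 + q)) : Euc (3 + q) :=
  epair (mk3 (zPrime z 0) (-(zPrime z 1)) (-(zPrime z 2))) (zSecond z)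

/-- Membership in the symmetric class `H_s` (inside `D^{1,2}`). -/
def memHs (m q k : ℕ) (u : Euc (m + (3 + q)) → ℝ) : Prop :=
  (Integrable fun x : Euc (m + (3 + q)) => ‖fderiv ℝ u x‖ ^ 2) ∧
  (Integrable fun x : Euc (m + (3 + q)) => |u x| ^ twoStar (m + (3 + q)) / ‖yPart x‖) ∧
  (∀ x x' : Euc (m + (3 + q)), ‖yPart x‖ = ‖yPart x'‖ → zPart x = zPart x' → u x = u x') ∧
  (∀ x : Euc (m + (3 + q)), u (epair (yPart x) (flip23 (zPart x))) = u x) ∧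
  (∀ x : Euc (m + (3 + q)), u (epair (yPart x) (rot2 (2 * π / k) (zPart x))) = u x)

/-- Membership in the constrained space `ℍ`. -/
def memH (m q k : ℕ) (η : Euc (m + (3 + q)) → ℝ) (r h : ℝ) (w : Euc q) (lam : ℝ)
    (v : Euc (m + (3 + q)) → ℝ) : Prop :=
  memHs m q k v ∧
  ∀ j ∈ Finset.Icc 1 k, ∀ l ∈ Finset.Icc 2 (3 + q), ∀ sgn ∈ ({1, -1} : Set ℝ),
    ∫ x : Euc (m + (3 + q)),
      (Zxi m q k η r h sgn w j lam x) ^ (twoStar (m + (3 + q)) - 2) / ‖yPart x‖ *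
        Zder m q k η r h sgn w j lam l x * v x = 0

/-- The right-hand side family `Σ_j (Z_{ξ_j^±,λ}^{2⋆-2}/|y|) Z_{j,l}^±`. -/
def orthFam (m q k : ℕ) (η : Euc (m + (3 + q)) → ℝ) (r h : ℝ) (w : Euc q) (lam : ℝ) (l : ℕ)
    (x : Euc (m + (3 + q))) : ℝ :=
  ∑ j ∈ Finset.Icc 1 k,
    ((Zxi m q k η r h 1 w j lam x) ^ (twoStar (m + (3 + q)) - 2) / ‖yPart x‖ *
        Zder m q k η r h 1 w j lam l x +
     (Zxi m q k η r h (-1) w j lam x) ^ (twoStar (m + (3 + q)) - 2) / ‖yPart x‖ *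
        Zder m q k η r h (-1) w j lam l x)

/-- `Σ_l c_l Σ_j (Z_{ξ_j^±,λ}^{2⋆-2}/|y|) Z_{j,l}^±`. -/
def multSum (m q k : ℕ) (η : Euc (m + (3 + q)) → ℝ) (r h : ℝ) (w : Euc q) (lam : ℝ)
    (c : ℕ → ℝ) (x : Euc (m + (3 + q))) : ℝ :=
  ∑ l ∈ Finset.Icc 2 (3 + q), c l * orthFam m q k η r h w lam l x

/-- The linearized problem (2.1). -/
def linEq (m q k : ℕ) (Vb Qb : ℝ × Euc q → ℝ) (η : Euc (m + (3 + q)) → ℝ) (r h : ℝ)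
    (w : Euc q) (lam : ℝ) (c : ℕ → ℝ) (f φ : Euc (m + (3 + q)) → ℝ) : Prop :=
  ∀ x, -lap φ x + potX m q Vb x * φ x -
      (twoStar (m + (3 + q)) - 1) * potX m q Qb x *
        ((Zfun m q k η r h w lam x) ^ (twoStar (m + (3 + q)) - 2) / ‖yPart x‖) * φ x
    = f x + multSum m q k η r h w lam c x

/-- The residual of `u = Z + φ` in the equation. -/
def resid (m q k : ℕ) (Vb Qb : ℝ × Euc q → ℝ) (η : Euc (m + (3 + q)) → ℝ) (r h : ℝ)
    (w : Euc q) (lam : ℝ) (φ : Euc (m + (3 + q)) → ℝ) (x : Euc (m + (3 + q))) : ℝ :=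
  -lap (fun x' => Zfun m q k η r h w lam x' + φ x') x
    + potX m q Vb x * (Zfun m q k η r h w lam x + φ x)
    - potX m q Qb x *
        (max (Zfun m q k η r h w lam x + φ x) 0) ^ (twoStar (m + (3 + q)) - 1) / ‖yPart x‖

/-- The perturbed problem (2.6). -/
def pertEq (m q k : ℕ) (Vb Qb : ℝ × Euc q → ℝ) (η : Euc (m + (3 + q)) → ℝ) (r h : ℝ)
    (w : Euc q) (lam : ℝ) (c : ℕ → ℝ) (φ : Euc (m + (3 + q)) → ℝ) : Prop :=
  ∀ x, resid m q k Vb Qb η r h w lam φ x = multSum m q k η r h w lam c x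

/-- Condition (C₁): boundedness and nonnegativity. -/
def CondC1 (q : ℕ) (Vb Qb : ℝ × Euc q → ℝ) : Prop :=
  (∃ C, ∀ a, |Vb a| ≤ C ∧ |Qb a| ≤ C) ∧ ∀ a, 0 ≤ Vb a ∧ 0 ≤ Qb a

/-- `a0` is a stable critical point of `Qb` (the meaning of `deg(∇Q, a0) ≠ 0`). -/
def StableCrit (q : ℕ) (Qb : ℝ × Euc q → ℝ) (a0 : ℝ × Euc q) (ρ : ℝ) : Prop :=
  fderiv ℝ Qb a0 = 0 ∧
  ∀ ρ', 0 < ρ' → ρ' ≤ ρ →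
    ∃ ε > 0, ∀ G : ℝ × Euc q → (ℝ × Euc q) →L[ℝ] ℝ,
      ContinuousOn G (closedBall a0 ρ') →
      (∀ a ∈ closedBall a0 ρ', ‖G a - fderiv ℝ Qb a‖ ≤ ε) →
      ∃ a ∈ closedBall a0 ρ', G a = 0

/-- Condition (C₂). -/
def CondC2 (q : ℕ) (Qb : ℝ × Euc q → ℝ) (r0 : ℝ) (z0 : Euc q) (ρ : ℝ) : Prop :=
  0 < r0 ∧ Qb (r0, z0) = 1 ∧ StableCrit q Qb (r0, z0) ρ

/-- The Laplacian of a function of `(r, z'')`. -/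
def lapRZ (q : ℕ) (Qb : ℝ × Euc q → ℝ) (a : ℝ × Euc q) : ℝ :=
  iteratedDeriv 2 (fun t => Qb (t, a.2)) a.1 +
    ∑ i : Fin q, iteratedDeriv 2 (fun t => Qb (a.1, updE a.2 i t)) (a.2 i)

/-- Condition (C₃); `Bt` is the constant `B̃₁`. -/
def CondC3 (m q : ℕ) (Vb Qb : ℝ × Euc q → ℝ) (r0 : ℝ) (z0 : Euc q) (ρ Bt : ℝ) : Prop :=
  0 < ρ ∧ ContDiffOn ℝ 1 Vb (ball (r0, z0) ρ) ∧ ContDiffOn ℝ 3 Qb (ball (r0, z0) ρ) ∧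
  0 < Bt ∧
  (∀ (ξ : Euc (3 + q)) (lam : ℝ), 0 < lam →
    deriv (fun t => ∫ x : Euc (m + (3 + q)), (Ubub m (3 + q) ξ t x) ^ 2) lam
      = -(2 * Bt) / lam ^ 3) ∧
  0 < Bt * Vb (r0, z0) * (∫ x : Euc (m + (3 + q)), (Ubub m (3 + q) 0 1 x) ^ 2) -
      lapRZ q Qb (r0, z0) / (twoStar (m + (3 + q)) * ((3 : ℝ) + q)) *
        ∫ x : Euc (m + (3 + q)),
          ‖zPart x‖ ^ 2 / ‖yPart x‖ * (Ubub m (3 + q) 0 1 x) ^ twoStar (m + (3 + q))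

/-- The constant `B₁` of the energy expansion. -/
def B1const (m q : ℕ) (Vb Qb : ℝ × Euc q → ℝ) (r0 : ℝ) (z0 : Euc q) (Bt : ℝ) : ℝ :=
  Bt * Vb (r0, z0) * (∫ x : Euc (m + (3 + q)), (Ubub m (3 + q) 0 1 x) ^ 2) -
    lapRZ q Qb (r0, z0) / (twoStar (m + (3 + q)) * ((3 : ℝ) + q)) *
      ∫ x : Euc (m + (3 + q)),
        ‖zPart x‖ ^ 2 / ‖yPart x‖ * (Ubub m (3 + q) 0 1 x) ^ twoStar (m + (3 + q))

/-- The energy functional `I`. -/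
def Ifun (m q : ℕ) (Vb Qb : ℝ × Euc q → ℝ) (u : Euc (m + (3 + q)) → ℝ) : ℝ :=
  (1 / 2) * (∫ x : Euc (m + (3 + q)), (‖fderiv ℝ u x‖ ^ 2 + potX m q Vb x * u x ^ 2)) -
  (1 / twoStar (m + (3 + q))) *
    ∫ x : Euc (m + (3 + q)),
      potX m q Qb x * (max (u x) 0) ^ twoStar (m + (3 + q)) / ‖yPart x‖

/-- `β₁ = α/(N-2)` where `α = N - 4 - ι`. -/
def beta1 (m q : ℕ) (ι : ℝ) : ℝ :=
  (((m + (3 + q) : ℕ) : ℝ) - 4 - ι) / (((m + (3 + q) : ℕ) : ℝ) - 2)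

/-- `τ = (N-4-α)/(N-2-α) = ι/(2+ι)` in the Case 1 regime. -/
def tau1 (ι : ℝ) : ℝ := ι / (2 + ι)

/-- The Case-1 parameter regime for a single `k` (with slack `θ` in the `o(·)` condition). -/
def regime1 (m q : ℕ) (r0 : ℝ) (z0 : Euc q) (ι L0 L1 M1 ϑ θ : ℝ) (k : ℕ)
    (lam r h : ℝ) (w : Euc q) : Prop :=
  (L0 * (k : ℝ) ^ (((((m + (3 + q) : ℕ) : ℝ)) - 2) / ι) ≤ lam ∧
     lam ≤ L1 * (k : ℝ) ^ (((((m + (3 + q) : ℕ) : ℝ)) - 2) / ι)) ∧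
  0 < r ∧ 0 < h ∧ h < 1 ∧
  distRZ q r w r0 z0 ≤ lam ^ (-(1 - ϑ)) ∧
  |Real.sqrt (1 - h ^ 2) - M1 * lam ^ (-(beta1 m q ι))| ≤ θ * lam ^ (-(beta1 m q ι))

/-- `∂Z_{r̄,h̄,z̄'',λ}/∂λ`. -/
def dZlam (m q k : ℕ) (η : Euc (m + (3 + q)) → ℝ) (r h : ℝ) (w : Euc q) (lam : ℝ)
    (x : Euc (m + (3 + q))) : ℝ :=
  deriv (fun t => Zfun m q k η r h w t x) lam

/-- The coordinate direction of `z''_i` inside `ℝ^N`. -/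
def dirZ'' (m q : ℕ) (i : Fin q) : Euc (m + (3 + q)) :=
  epair (0 : Euc m) (epair (0 : Euc 3) (EuclideanSpace.single i (1 : ℝ)))

/-- `N` as a real number. -/
def Nreal (m q : ℕ) : ℝ := ((m + (3 + q) : ℕ) : ℝ)


/-!
Write `f t = φ(√t, z)`. The Grushin solution is `y ↦ f(|y|²)` on `ℝ^{n₁}` and `w` is `y ↦ f(|y|)`
on `ℝ^m`. For radial functions `Δ[f(|y|²)] = 4|y|² f'' + 2n f'` and
`Δ[f(|y|)] = f'' + (n - 1) f' / |y|`, so at a point `y₀ ∈ ℝ^{n₁}` with `|y₀|² = s = |y|` the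
`y`-Laplacian of the Grushin solution is `4s` times that of `w` (as `2n₁ = 4(m - 1)`), while the
`z`-Laplacians coincide. Dividing the Grushin equation at `(y₀, z)` by `4s` gives the equation for `w`.
-/

open Topology

@[simp]
lemma yPart_epair {a b : ℕ} (y : Euc a) (z : Euc b) : yPart (epair y z) = y := by
  ext i; simp [yPart, epair]

@[simp]
lemma zPart_epair {a b : ℕ} (y : Euc a) (z : Euc b) : zPart (epair y z) = z := by
  ext j; simp [zPart, epair]

lemma updE_castAdd {a b : ℕ} (x : Euc (a + b)) (i : Fin a) (t : ℝ) :
    updE x (Fin.castAdd b i) t = epair (updE (yPart x) i t) (zPart x) := by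
  ext j
  refine Fin.addCases (fun k => ?_) (fun k => ?_) j
  · simp [updE, epair, yPart, Function.update_apply, Fin.ext_iff]
  · simp [updE, epair, zPart, Function.update_apply, Fin.ext_iff]
    omega

lemma updE_natAdd {a b : ℕ} (x : Euc (a + b)) (i : Fin b) (t : ℝ) :
    updE x (Fin.natAdd a i) t = epair (yPart x) (updE (zPart x) i t) := by
  ext j
  refine Fin.addCases (fun k => ?_) (fun k => ?_) j
  · simp [updE, epair, yPart, Function.update_apply, Fin.ext_iff]
    omega
  · simp [updE, epair, zPart, Function.update_apply, Fin.ext_iff]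

lemma lap_eq_lapY_add_lapZ {a b : ℕ} (f : Euc (a + b) → ℝ) (x : Euc (a + b)) :
    lap f x = lapY f x + lapZ f x := by
  simp only [lap, lapY, lapZ, Fin.sum_univ_add, updE_castAdd, updE_natAdd]
  rfl

lemma lapY_comp_parts {a b : ℕ} (g : Euc a → Euc b → ℝ) (x : Euc (a + b)) :
    lapY (fun x' => g (yPart x') (zPart x')) x = lap (fun y => g y (zPart x)) (yPart x) := by
  simp only [lapY, lap, yPart_epair, zPart_epair]

lemma lapZ_comp_parts {a b : ℕ} (g : Euc a → Euc b → ℝ) (x : Euc (a + b)) :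
    lapZ (fun x' => g (yPart x') (zPart x')) x = lap (g (yPart x)) (zPart x) := by
  simp only [lapZ, lap, yPart_epair, zPart_epair]

lemma norm_updE_sq {n : ℕ} (y : Euc n) (i : Fin n) (t : ℝ) :
    ‖updE y i t‖ ^ 2 = ‖y‖ ^ 2 - y i ^ 2 + t ^ 2 := by
  have hupd : ∀ j, updE y i t j ^ 2 = Function.update (fun j => y j ^ 2) i (t ^ 2) j := fun j => by
    rcases eq_or_ne j i with rfl | h <;> simp [updE, *]
  rw [EuclideanSpace.real_norm_sq_eq, EuclideanSpace.real_norm_sq_eq,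
    Finset.sum_congr rfl fun j _ => hupd j, Finset.sum_update_of_mem (Finset.mem_univ i),
    Finset.sum_eq_add_sum_sdiff_singleton_of_mem (Finset.mem_univ i)]
  ring

lemma iteratedDeriv_two_sqrt {a : ℝ} (ha : 0 < a) :
    iteratedDeriv 2 (√·) a = -1 / (4 * a * √a) := by
  have hpow : a ^ ((1 : ℝ) / 2 - (2 : ℕ)) = a⁻¹ * (√a)⁻¹ := by
    rw [show (1 : ℝ) / 2 - (2 : ℕ) = -1 + -(1 / 2) by norm_num, Real.rpow_add ha, Real.rpow_neg_one,
      Real.rpow_neg ha.le, ← Real.sqrt_eq_rpow]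
  rw [show (√· : ℝ → ℝ) = fun x => x ^ (1 / 2 : ℝ) from funext Real.sqrt_eq_rpow,
    iteratedDeriv_eq_iterate, Real.iter_deriv_rpow_const, hpow]
  simp only [descPochhammer_succ_right, descPochhammer_zero, Polynomial.eval_mul,
    Polynomial.eval_X, Polynomial.eval_sub, Polynomial.eval_one, Polynomial.eval_natCast]
  field_simp
  norm_num

lemma lap_comp_norm_sq {n : ℕ} {g : ℝ → ℝ} (y : Euc n) (hg : ContDiffAt ℝ 2 g (‖y‖ ^ 2)) :
    lap (fun y => g (‖y‖ ^ 2)) y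
      = 4 * ‖y‖ ^ 2 * iteratedDeriv 2 g (‖y‖ ^ 2) + 2 * n * deriv g (‖y‖ ^ 2) := by
  have hcoord : ∀ i, iteratedDeriv 2 (fun t => g (‖updE y i t‖ ^ 2)) (y i)
      = 4 * y i ^ 2 * iteratedDeriv 2 g (‖y‖ ^ 2) + 2 * deriv g (‖y‖ ^ 2) := by
    intro i
    set q : ℝ → ℝ := fun t => ‖y‖ ^ 2 - y i ^ 2 + t ^ 2
    have hq : ContDiffAt ℝ 2 q (y i) := by fun_prop
    have hqy : q (y i) = ‖y‖ ^ 2 := by ring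
    have hgq : ContDiffAt ℝ 2 g (q (y i)) := by rwa [hqy]
    have hq1 : deriv q (y i) = 2 * y i := by simp [q]
    have hq2 : iteratedDeriv 2 q (y i) = 2 := by simp [q, iteratedDeriv_const_add]
    simp only [norm_updE_sq]
    rw [show (fun t => g (‖y‖ ^ 2 - y i ^ 2 + t ^ 2)) = g ∘ q from rfl,
      iteratedDeriv_comp_two hgq hq, hqy, hq1, hq2]
    ring
  rw [lap, Finset.sum_congr rfl fun i _ => hcoord i, Finset.sum_add_distrib, ← Finset.sum_mul,
    ← Finset.mul_sum, ← EuclideanSpace.real_norm_sq_eq]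
  simp only [Finset.sum_const, Finset.card_univ, Fintype.card_fin, nsmul_eq_mul]
  ring

lemma lap_comp_norm {n : ℕ} {f : ℝ → ℝ} {y : Euc n} (hy : y ≠ 0) (hf : ContDiffAt ℝ 2 f ‖y‖) :
    lap (fun y => f ‖y‖) y = iteratedDeriv 2 f ‖y‖ + (n - 1) / ‖y‖ * deriv f ‖y‖ := by
  have hr : 0 < ‖y‖ := norm_pos_iff.2 hy
  have hr2 : ‖y‖ ^ 2 ≠ 0 := by positivity
  have hsq : √(‖y‖ ^ 2) = ‖y‖ := Real.sqrt_sq hr.le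
  have hs : ContDiffAt ℝ 2 (√·) (‖y‖ ^ 2) := Real.contDiffAt_sqrt hr2
  have hfs : ContDiffAt ℝ 2 f (√(‖y‖ ^ 2)) := by rwa [hsq]
  have hds : deriv (√·) (‖y‖ ^ 2) = 1 / (2 * ‖y‖) := by
    rw [(Real.hasDerivAt_sqrt hr2).deriv, hsq]
  have h1 : deriv (f ∘ (√·)) (‖y‖ ^ 2) = deriv f ‖y‖ / (2 * ‖y‖) := by
    rw [deriv_comp _ (hfs.differentiableAt two_ne_zero) (hs.differentiableAt two_ne_zero), hds, hsq]
    ring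
  have h2 : iteratedDeriv 2 (f ∘ (√·)) (‖y‖ ^ 2)
      = iteratedDeriv 2 f ‖y‖ / (4 * ‖y‖ ^ 2) - deriv f ‖y‖ / (4 * ‖y‖ ^ 3) := by
    rw [iteratedDeriv_comp_two hfs hs, iteratedDeriv_two_sqrt (by positivity), hds, hsq]
    field_simp
    ring
  calc lap (fun y => f ‖y‖) y = lap (fun y => (f ∘ (√·)) (‖y‖ ^ 2)) y := by
        simp only [Function.comp_apply, Real.sqrt_sq (norm_nonneg _)]
    _ = iteratedDeriv 2 f ‖y‖ + (n - 1) / ‖y‖ * deriv f ‖y‖ := by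
        rw [lap_comp_norm_sq y (hfs.comp _ hs), h1, h2]
        field_simp
        ring

lemma twoStar_sub_one_eq {n₁ n₂ m : ℕ} (hm : 2 * m = n₁ + 2) (hN : m + n₂ ≠ 2) :
    twoStar (m + n₂) - 1 = ((n₁ : ℝ) + 2 * n₂ + 2) / ((n₁ : ℝ) + 2 * n₂ - 2) := by
  have hn₁ : (n₁ : ℝ) = 2 * m - 2 := by linarith [show (2 * m : ℝ) = n₁ + 2 by exact_mod_cast hm]
  have hN' : (m : ℝ) + n₂ - 2 ≠ 0 := by
    rw [sub_ne_zero]; exact_mod_cast hN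
  have hden : 2 * (m : ℝ) - 2 + 2 * n₂ - 2 ≠ 0 := by
    contrapose! hN'; linarith
  rw [twoStar, hn₁]
  push_cast
  rw [div_sub_one hN', div_eq_div_iff hN' hden]
  ring

lemma contDiffAt_sqrt_left {E : Type*} [NormedAddCommGroup E] [NormedSpace ℝ E]
    {n : WithTop ℕ∞} {φ : ℝ × E → ℝ} (hφ : ContDiffOn ℝ n φ {a | 0 ≤ a.1}) (z : E) {s : ℝ}
    (hs : 0 < s) : ContDiffAt ℝ n (fun t => φ (√t, z)) s := by
  have hmem : {a : ℝ × E | 0 ≤ a.1} ∈ 𝓝 (√s, z) :=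
    mem_of_superset ((isOpen_lt continuous_const continuous_fst).mem_nhds (Real.sqrt_pos.2 hs))
      fun a (ha : 0 < a.1) => ha.le
  exact (hφ.contDiffAt hmem).comp s ((Real.contDiffAt_sqrt hs.ne').prodMk contDiffAt_const)

theorem stmt3_general (n₁ n₂ : ℕ) (hn₁ : 0 < n₁) (hn₂ : 0 < n₂)
    (m : ℕ) (hm : 2 * m = n₁ + 2)
    (𝒱 𝒬 : ℝ → Euc n₂ → ℝ)
    (φb : ℝ × Euc n₂ → ℝ)
    (hreg : ContDiffOn ℝ 2 φb {a : ℝ × Euc n₂ | 0 ≤ a.1})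
    (hsol : ∀ x : Euc (n₁ + n₂),
      -lapY (fun x' => φb (‖yPart x'‖, zPart x')) x
          - 4 * ‖yPart x‖ ^ 2 * lapZ (fun x' => φb (‖yPart x'‖, zPart x')) x
          + 4 * ‖yPart x‖ ^ 2 * 𝒱 ‖yPart x‖ (zPart x) * φb (‖yPart x‖, zPart x)
        = 4 * 𝒬 ‖yPart x‖ (zPart x) *
            (φb (‖yPart x‖, zPart x)) ^
              ((((n₁ : ℝ) + 2 * n₂) + 2) / (((n₁ : ℝ) + 2 * n₂) - 2))) :
    ∀ x : Euc (m + n₂), yPart x ≠ 0 →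
      -lap (fun x' => φb (Real.sqrt ‖yPart x'‖, zPart x')) x
          + 𝒱 (Real.sqrt ‖yPart x‖) (zPart x) * φb (Real.sqrt ‖yPart x‖, zPart x)
        = 𝒬 (Real.sqrt ‖yPart x‖) (zPart x) *
            (φb (Real.sqrt ‖yPart x‖, zPart x)) ^ (twoStar (m + n₂) - 1) / ‖yPart x‖ := by
  intro x hx
  rw [lap_eq_lapY_add_lapZ, lapY_comp_parts (fun (y : Euc m) z => φb (√‖y‖, z)),
    lapZ_comp_parts (fun (y : Euc m) z => φb (√‖y‖, z))]
  set z := zPart x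
  set s := ‖yPart x‖ with hs_def
  have hs : 0 < s := norm_pos_iff.2 hx
  set f : ℝ → ℝ := fun t => φb (√t, z)
  have hf : ContDiffAt ℝ 2 f s := contDiffAt_sqrt_left hreg z hs
  rw [lap_comp_norm (f := f) hx hf, ← hs_def]
  have hn₁' : NeZero n₁ := ⟨hn₁.ne'⟩
  obtain ⟨y₀, hy₀⟩ := exists_norm_eq (Euc n₁) (Real.sqrt_nonneg s)
  have hy₀s : ‖y₀‖ ^ 2 = s := by rw [hy₀, Real.sq_sqrt hs.le]
  have hGY : lapY (fun x' => φb (‖yPart x'‖, zPart x')) (epair y₀ z)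
      = 4 * s * iteratedDeriv 2 f s + 2 * n₁ * deriv f s := by
    have hsq : (fun y : Euc n₁ => φb (‖y‖, z)) = fun y => f (‖y‖ ^ 2) := by
      funext y; simp [f, Real.sqrt_sq]
    rw [lapY_comp_parts (fun (y : Euc n₁) z => φb (‖y‖, z)), yPart_epair, zPart_epair, hsq,
      lap_comp_norm_sq y₀ (by rwa [hy₀s]), hy₀s]
  have hG := hsol (epair y₀ z)
  rw [hGY, lapZ_comp_parts (fun (y : Euc n₁) z => φb (‖y‖, z)), yPart_epair, zPart_epair, hy₀,
    Real.sq_sqrt hs.le, ← twoStar_sub_one_eq hm (by omega),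
    show (n₁ : ℝ) = 2 * m - 2 by linarith [show (2 * m : ℝ) = n₁ + 2 by exact_mod_cast hm]] at hG
  field_simp
  linear_combination hG / 4

/-- the change of variables transforming the Grushin problem into
the Hardy-type problem. -/
theorem stmt3 (n₁ n₂ : ℕ) (hn₁ : 0 < n₁) (heven : Even n₁) (hn₂ : 0 < n₂)
    (m : ℕ) (hm : 2 * m = n₁ + 2)
    (𝒱 𝒬 : ℝ → Euc n₂ → ℝ)
    (φb : ℝ × Euc n₂ → ℝ)
    (hreg : ContDiffOn ℝ 2 φb {a : ℝ × Euc n₂ | 0 ≤ a.1})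
    (hpos : ∀ a : ℝ × Euc n₂, 0 ≤ a.1 → 0 < φb a)
    (hsol : ∀ x : Euc (n₁ + n₂),
      -lapY (fun x' => φb (‖yPart x'‖, zPart x')) x
          - 4 * ‖yPart x‖ ^ 2 * lapZ (fun x' => φb (‖yPart x'‖, zPart x')) x
          + 4 * ‖yPart x‖ ^ 2 * 𝒱 ‖yPart x‖ (zPart x) * φb (‖yPart x‖, zPart x)
        = 4 * 𝒬 ‖yPart x‖ (zPart x) *
            (φb (‖yPart x‖, zPart x)) ^
              ((((n₁ : ℝ) + 2 * n₂) + 2) / (((n₁ : ℝ) + 2 * n₂) - 2))) :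
    ∀ x : Euc (m + n₂), yPart x ≠ 0 →
      -lap (fun x' => φb (Real.sqrt ‖yPart x'‖, zPart x')) x
          + 𝒱 (Real.sqrt ‖yPart x‖) (zPart x) * φb (Real.sqrt ‖yPart x‖, zPart x)
        = 𝒬 (Real.sqrt ‖yPart x‖) (zPart x) *
            (φb (Real.sqrt ‖yPart x‖, zPart x)) ^ (twoStar (m + n₂) - 1) / ‖yPart x‖ :=
  stmt3_general n₁ n₂ hn₁ hn₂ m hm 𝒱 𝒬 φb hreg hsol
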